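/- For the Freund bivariate distribution, Cov(X,Y) = (β₁β₂ − α₁α₂) / (β₁β₂(α₁+α₂)²). -/

import Mathlib

/-!
The Freund density is `a1 b2 K_{b2}(x, y) + a2 b1 K_{b1}(y, x)`, where
`K_b(x, y) = exp (-(a1 + a2) x - b (y - x))` on `0 < x < y`: the minimum of the two coordinates
is exponential with rate `a1 + a2`, and the excess of the larger one is an independent
exponential with rate `b`. Writing `y = x + t` and expanding `(x + t)^j` binomially, every mixed
moment `∫∫ x^i y^j K_b` becomes a combination of the Gamma integrals
`∫₀^∞ t^n e^{-b t} dt = n! / b^(n+1)`. The second piece is the first with the coordinates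
swapped, so Fubini gives all moments of the Freund law, and the covariance formula is a
rational identity in the four parameters.
-/

open MeasureTheory Real

/-- The Freund bivariate mixture exponential density. -/
noncomputable def freund (a1 b1 a2 b2 : ℝ) (x y : ℝ) : ℝ :=
  if 0 < x ∧ x < y then a1 * b2 * Real.exp (-b2 * y - (a1 + a2 - b2) * x)
  else if 0 < y ∧ y < x then a2 * b1 * Real.exp (-b1 * x - (a1 + a2 - b1) * y)
  else 0

/-- Expectation of `φ(x,y)` under the Freund density. -/
noncomputable def freundE (a1 b1 a2 b2 : ℝ) (φ : ℝ → ℝ → ℝ) : ℝ :=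
  ∫ x in Set.Ioi (0:ℝ), ∫ y in Set.Ioi (0:ℝ), φ x y * freund a1 b1 a2 b2 x y

open Set Finset
open scoped Nat

theorem integral_pow_mul_exp_neg_mul_Ioi (n : ℕ) {b : ℝ} (hb : 0 < b) :
    ∫ t in Ioi (0 : ℝ), t ^ n * exp (-(b * t)) = n ! / b ^ (n + 1) := by
  have h := Real.integral_rpow_mul_exp_neg_mul_Ioi (a := n + 1) (by positivity) hb
  rw [add_sub_cancel_right, Real.Gamma_nat_eq_factorial, ← Nat.cast_add_one] at h
  simp only [Real.rpow_natCast] at h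
  rw [h, one_div_pow]
  ring

theorem integrableOn_pow_mul_exp_neg_mul_Ioi (n : ℕ) {b : ℝ} (hb : 0 < b) :
    IntegrableOn (fun t => t ^ n * exp (-(b * t))) (Ioi 0) :=
  Integrable.of_integral_ne_zero <| by
    rw [integral_pow_mul_exp_neg_mul_Ioi n hb]
    positivity

theorem integral_Ioi_comp_add_right (g : ℝ → ℝ) (x : ℝ) :
    ∫ y in Ioi x, g y = ∫ t in Ioi 0, g (t + x) := by
  simpa using ((measurePreserving_add_right volume x).setIntegral_preimage_emb
    (measurableEmbedding_addRight x) g (Ioi x)).symm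

theorem integral_Ioi_pow_mul_exp_neg_mul (j : ℕ) {b : ℝ} (hb : 0 < b) (x : ℝ) :
    ∫ y in Ioi x, y ^ j * exp (-(b * y)) =
      exp (-(b * x)) * ∑ k ∈ range (j + 1), j.choose k * (k ! / b ^ (k + 1)) * x ^ (j - k) := by
  have expand : ∀ t, (t + x) ^ j * exp (-(b * (t + x))) = exp (-(b * x)) *
      ∑ k ∈ range (j + 1), j.choose k * x ^ (j - k) * (t ^ k * exp (-(b * t))) := by
    intro t
    rw [add_pow, Finset.sum_mul, Finset.mul_sum]
    refine sum_congr rfl fun k _ => ?_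
    rw [show -(b * (t + x)) = -(b * t) + -(b * x) by ring, exp_add]
    ring
  rw [integral_Ioi_comp_add_right]
  simp_rw [expand]
  rw [integral_const_mul, integral_finsetSum _ fun k _ =>
    (integrableOn_pow_mul_exp_neg_mul_Ioi k hb).const_mul _]
  congr 1
  refine sum_congr rfl fun k _ => ?_
  rw [integral_const_mul, integral_pow_mul_exp_neg_mul_Ioi k hb]
  ring

noncomputable def freundKernel (b s x y : ℝ) : ℝ :=
  if 0 < x ∧ x < y then exp (-b * y - (s - b) * x) else 0

theorem freund_eq_add (a1 b1 a2 b2 x y : ℝ) :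
    freund a1 b1 a2 b2 x y =
      a1 * b2 * freundKernel b2 (a1 + a2) x y + a2 * b1 * freundKernel b1 (a1 + a2) y x := by
  unfold freund freundKernel
  split_ifs <;> first | (exfalso; linarith) | ring

theorem measurable_freundKernel (b s : ℝ) :
    Measurable fun p : ℝ × ℝ => freundKernel b s p.1 p.2 :=
  Measurable.ite ((measurableSet_lt measurable_const measurable_fst).inter
    (measurableSet_lt measurable_fst measurable_snd)) (by fun_prop) measurable_const

theorem pow_mul_pow_mul_freundKernel_nonneg (i j : ℕ) (b s x y : ℝ) :
    0 ≤ x ^ i * y ^ j * freundKernel b s x y := by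
  unfold freundKernel
  split_ifs with h
  · have hx := h.1
    have hy := h.1.trans h.2
    positivity
  · rw [mul_zero]

noncomputable def freundKernelMoment (b s : ℝ) (i j : ℕ) : ℝ :=
  ∑ k ∈ range (j + 1), j.choose k * (k ! / b ^ (k + 1)) * ((i + (j - k))! / s ^ (i + (j - k) + 1))

local notation "μ₊" => volume.restrict (Ioi (0 : ℝ))

section Kernel

variable {b s : ℝ} (i j : ℕ)

theorem pow_mul_freundKernel_eq_indicator {x : ℝ} (hx : 0 < x) :
    (fun y => y ^ j * freundKernel b s x y) =
      (Ioi x).indicator fun y => exp (-((s - b) * x)) * (y ^ j * exp (-(b * y))) := by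
  ext y
  by_cases hy : x < y
  · rw [indicator_of_mem (show y ∈ Ioi x from hy), freundKernel, if_pos ⟨hx, hy⟩,
      show -b * y - (s - b) * x = -((s - b) * x) + -(b * y) by ring, exp_add]
    ring
  · rw [indicator_of_notMem (show y ∉ Ioi x from hy), freundKernel, if_neg fun h => hy h.2,
      mul_zero]

theorem integrable_pow_mul_freundKernel (hb : 0 < b) {x : ℝ} (hx : 0 < x) :
    Integrable (fun y => y ^ j * freundKernel b s x y) μ₊ := by
  rw [pow_mul_freundKernel_eq_indicator j hx]
  refine ((integrable_indicator_iff measurableSet_Ioi).2 ?_).mono_measure Measure.restrict_le_self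
  exact ((integrableOn_pow_mul_exp_neg_mul_Ioi j hb).mono_set (Ioi_subset_Ioi hx.le)).const_mul _

theorem setIntegral_pow_mul_freundKernel (hb : 0 < b) {x : ℝ} (hx : 0 < x) :
    ∫ y in Ioi 0, y ^ j * freundKernel b s x y =
      exp (-(s * x)) * ∑ k ∈ range (j + 1), j.choose k * (k ! / b ^ (k + 1)) * x ^ (j - k) := by
  rw [pow_mul_freundKernel_eq_indicator j hx, setIntegral_indicator measurableSet_Ioi,
    inter_eq_right.2 (Ioi_subset_Ioi hx.le), integral_const_mul,
    integral_Ioi_pow_mul_exp_neg_mul j hb, ← mul_assoc, ← exp_add]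
  congr 2
  ring

theorem setIntegral_pow_mul_pow_mul_freundKernel (hb : 0 < b) {x : ℝ} (hx : 0 < x) :
    ∫ y in Ioi 0, x ^ i * y ^ j * freundKernel b s x y =
      ∑ k ∈ range (j + 1),
        j.choose k * (k ! / b ^ (k + 1)) * (x ^ (i + (j - k)) * exp (-(s * x))) := by
  simp_rw [mul_assoc]
  rw [integral_const_mul, setIntegral_pow_mul_freundKernel j hb hx, mul_sum, mul_sum]
  refine sum_congr rfl fun k _ => ?_
  ring

theorem integrable_pow_mul_pow_mul_freundKernel_prod (hb : 0 < b) (hs : 0 < s) :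
    Integrable (fun p : ℝ × ℝ => p.1 ^ i * p.2 ^ j * freundKernel b s p.1 p.2) (μ₊.prod μ₊) := by
  have hmeas := measurable_freundKernel b s
  rw [integrable_prod_iff (by fun_prop)]
  constructor
  · filter_upwards [ae_restrict_mem measurableSet_Ioi] with x hx
    simp_rw [mul_assoc]
    exact (integrable_pow_mul_freundKernel j hb hx).const_mul _
  · simp_rw [Real.norm_of_nonneg (pow_mul_pow_mul_freundKernel_nonneg i j b s _ _)]
    have hsum : Integrable (fun x => ∑ k ∈ range (j + 1),
        j.choose k * (k ! / b ^ (k + 1)) * (x ^ (i + (j - k)) * exp (-(s * x)))) μ₊ :=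
      integrable_finsetSum _ fun k _ =>
        (integrableOn_pow_mul_exp_neg_mul_Ioi (i + (j - k)) hs).const_mul _
    refine hsum.congr ?_
    filter_upwards [ae_restrict_mem measurableSet_Ioi] with x hx
    exact (setIntegral_pow_mul_pow_mul_freundKernel i j hb hx).symm

theorem integral_pow_mul_pow_mul_freundKernel_prod (hb : 0 < b) (hs : 0 < s) :
    ∫ p, p.1 ^ i * p.2 ^ j * freundKernel b s p.1 p.2 ∂(μ₊.prod μ₊) =
      freundKernelMoment b s i j := by
  rw [integral_prod _ (integrable_pow_mul_pow_mul_freundKernel_prod i j hb hs),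
    setIntegral_congr_fun measurableSet_Ioi fun x hx =>
      setIntegral_pow_mul_pow_mul_freundKernel i j hb hx,
    integral_finsetSum _ fun k _ =>
      (integrableOn_pow_mul_exp_neg_mul_Ioi (i + (j - k)) hs).const_mul _]
  refine sum_congr rfl fun k _ => ?_
  rw [integral_const_mul, integral_pow_mul_exp_neg_mul_Ioi _ hs]

end Kernel

theorem freundE_pow_mul_pow {a1 b1 a2 b2 : ℝ} (i j : ℕ) (hb1 : 0 < b1) (hb2 : 0 < b2)
    (hs : 0 < a1 + a2) :
    freundE a1 b1 a2 b2 (fun x y => x ^ i * y ^ j) =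
      a1 * b2 * freundKernelMoment b2 (a1 + a2) i j +
        a2 * b1 * freundKernelMoment b1 (a1 + a2) j i := by
  set F₁ := fun p : ℝ × ℝ => p.1 ^ i * p.2 ^ j * freundKernel b2 (a1 + a2) p.1 p.2
  set F₂ := fun p : ℝ × ℝ => p.1 ^ j * p.2 ^ i * freundKernel b1 (a1 + a2) p.1 p.2
  have h₁ : Integrable F₁ (μ₊.prod μ₊) := integrable_pow_mul_pow_mul_freundKernel_prod i j hb2 hs
  have h₂ : Integrable (fun p => F₂ p.swap) (μ₊.prod μ₊) :=
    (integrable_pow_mul_pow_mul_freundKernel_prod j i hb1 hs).swap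
  have hsplit : (fun p : ℝ × ℝ => p.1 ^ i * p.2 ^ j * freund a1 b1 a2 b2 p.1 p.2) =
      fun p => a1 * b2 * F₁ p + a2 * b1 * F₂ p.swap := by
    ext p
    simp only [F₁, F₂, Prod.fst_swap, Prod.snd_swap, freund_eq_add]
    ring
  have hint : Integrable (fun p : ℝ × ℝ => p.1 ^ i * p.2 ^ j * freund a1 b1 a2 b2 p.1 p.2)
      (μ₊.prod μ₊) := by
    rw [hsplit]
    exact (h₁.const_mul _).add (h₂.const_mul _)
  calc freundE a1 b1 a2 b2 (fun x y => x ^ i * y ^ j)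
      = ∫ p, p.1 ^ i * p.2 ^ j * freund a1 b1 a2 b2 p.1 p.2 ∂(μ₊.prod μ₊) :=
        (integral_prod _ hint).symm
    _ = _ := by
      rw [hsplit, integral_add (h₁.const_mul _) (h₂.const_mul _), integral_const_mul,
        integral_const_mul, integral_prod_swap F₂,
        integral_pow_mul_pow_mul_freundKernel_prod i j hb2 hs,
        integral_pow_mul_pow_mul_freundKernel_prod j i hb1 hs]

theorem freund_covariance (a1 b1 a2 b2 : ℝ)
    (ha1 : 0 < a1) (hb1 : 0 < b1) (ha2 : 0 < a2) (hb2 : 0 < b2) :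
    freundE a1 b1 a2 b2 (fun x y => x * y) -
      freundE a1 b1 a2 b2 (fun x _ => x) * freundE a1 b1 a2 b2 (fun _ y => y) =
    (b1 * b2 - a1 * a2) / (b1 * b2 * (a1 + a2) ^ 2) := by
  have hs : 0 < a1 + a2 := add_pos ha1 ha2
  have hXY := freundE_pow_mul_pow 1 1 hb1 hb2 hs
  have hX := freundE_pow_mul_pow 1 0 hb1 hb2 hs
  have hY := freundE_pow_mul_pow 0 1 hb1 hb2 hs
  simp only [pow_one, pow_zero, mul_one, one_mul] at hXY hX hY
  rw [hXY, hX, hY]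
  simp only [freundKernelMoment, sum_range_succ, range_one, sum_singleton, Nat.choose_self,
    Nat.choose_succ_self_right, Nat.factorial, tsub_zero, tsub_self, zero_tsub, Nat.cast_one]
  field_simp
  ring
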